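/- The function φ is strictly increasing and satisfies −1/x < φ(x) < −1/(2x) for all x > 0 (in particular φ < 0), with φ(x) → −∞ as x → 0⁺ and φ(x) → 0 as x → ∞. Consequently, for every constant c > 0 the function x ↦ φ(x) + c has a unique zero in (0,∞). -/

import Mathlib

open Real Filter Topology

/-- The digamma function `ψ(x) = d/dx log Γ(x)`. -/
noncomputable def digamma (x : ℝ) : ℝ := deriv (fun y => Real.log (Real.Gamma y)) x

/-- `φ(x) := ψ(x) - log x`. -/
noncomputable def phiFn (x : ℝ) : ℝ := digamma x - Real.log x

/-!
By convexity of `log Γ`, its slope `log x` over `[x, x + 1]` lies between `ψ(x)` and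
`ψ(x + 1) = ψ(x) + 1/x`; hence `-1/x ≤ φ(x) ≤ 0` and `φ → 0` at `∞`.
The increment `φ(t) - φ(t + 1) = log (1 + 1/t) - 1/t` is strictly increasing in `t` and lies
strictly between `1/(t + 1) - 1/t` and half of it. A function that increases strictly along
`x, x + 1, x + 2, …` to the limit `0` is negative at `x`; applied to differences of `φ` with
`-1/x`, `-1/(2x)` and `φ(· + h)`, this gives the strict bounds and the strict monotonicity.
Finally `φ` is the derivative of `log Γ(x) - x log x + x`, so by Darboux's theorem its range is an
interval, which by the limits at `0⁺` and `∞` contains every negative number.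
-/

open Set

namespace Real

lemma one_sub_inv_lt_log {y : ℝ} (hy : 0 < y) (hy1 : y ≠ 1) : 1 - y⁻¹ < log y := by
  have h := log_lt_sub_one_of_pos (inv_pos.mpr hy) (inv_ne_one.mpr hy1)
  rw [log_inv] at h
  linarith

lemma log_lt_sub_inv_div_two {y : ℝ} (hy : 1 < y) : log y < (y - y⁻¹) / 2 := by
  rw [← sinh_log (by linarith)]
  exact self_lt_sinh_iff.mpr (log_pos hy)

lemma strictAntiOn_log_one_add_sub_self : StrictAntiOn (fun u ↦ log (1 + u) - u) (Ici 0) := by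
  intro v hv u hu hvu
  rw [mem_Ici] at hv hu
  have hlog : log ((1 + u) / (1 + v)) < (1 + u) / (1 + v) - 1 :=
    log_lt_sub_one_of_pos (by positivity) ((one_lt_div (by positivity)).mpr (by linarith)).ne'
  rw [log_div (by positivity) (by positivity)] at hlog
  have : (1 + u) / (1 + v) - 1 ≤ u - v := by
    rw [div_sub_one (by positivity), div_le_iff₀ (by positivity)]
    nlinarith
  show log (1 + u) - u < log (1 + v) - v
  linarith

end Real

lemma neg_of_tendsto_zero_of_lt_add_one {D : ℝ → ℝ} {x : ℝ} (hD : Tendsto D atTop (𝓝 0))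
    (hstep : ∀ t ≥ x, D t < D (t + 1)) : D x < 0 := by
  set u : ℕ → ℝ := fun n ↦ D (x + n)
  have hu : StrictMono u := strictMono_nat_of_lt_succ fun n ↦ by
    simpa [u, add_assoc] using hstep (x + n) (by simp)
  have hlim : Tendsto u atTop (𝓝 0) :=
    hD.comp (tendsto_atTop_add_const_left _ x tendsto_natCast_atTop_atTop)
  calc D x = u 0 := by simp [u]
    _ < u 1 := hu zero_lt_one
    _ ≤ 0 := hu.monotone.ge_of_tendsto hlim 1

section Digamma

variable {x : ℝ}

lemma hasDerivAt_log_Gamma (hx : 0 < x) : HasDerivAt (log ∘ Gamma) (digamma x) x := by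
  have hx' : ∀ m : ℕ, x ≠ -m := fun m ↦ ((neg_nonpos.mpr m.cast_nonneg).trans_lt hx).ne'
  exact ((differentiableAt_Gamma hx').log (Gamma_ne_zero hx')).hasDerivAt

lemma log_Gamma_add_one (hx : 0 < x) : log (Gamma (x + 1)) = log (Gamma x) + log x := by
  rw [Gamma_add_one hx.ne', log_mul hx.ne' (Gamma_pos_of_pos hx).ne', add_comm]

lemma digamma_add_one (hx : 0 < x) : digamma (x + 1) = digamma x + x⁻¹ := by
  have h := (hasDerivAt_log_Gamma (x := x + 1) (by linarith)).comp_add_const x 1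
  have h' : HasDerivAt (fun y ↦ (log ∘ Gamma) (y + 1)) (digamma x + x⁻¹) x :=
    ((hasDerivAt_log_Gamma hx).add (hasDerivAt_log hx.ne')).congr_of_eventuallyEq <| by
      filter_upwards [eventually_gt_nhds hx] with y hy
      exact log_Gamma_add_one hy
  exact h.unique h'

lemma digamma_le_log (hx : 0 < x) : digamma x ≤ log x := by
  have h := convexOn_log_Gamma.le_slope_of_hasDerivAt (mem_Ioi.mpr hx)
    (mem_Ioi.mpr (by linarith : 0 < x + 1)) (lt_add_one x) (hasDerivAt_log_Gamma hx)
  rw [slope_def_field] at h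
  simpa [log_Gamma_add_one hx] using h

lemma log_le_digamma_add_inv (hx : 0 < x) : log x ≤ digamma x + x⁻¹ := by
  have h := convexOn_log_Gamma.slope_le_of_hasDerivAt (mem_Ioi.mpr hx)
    (mem_Ioi.mpr (by linarith : 0 < x + 1)) (lt_add_one x)
    (hasDerivAt_log_Gamma (by linarith : 0 < x + 1))
  rw [slope_def_field, digamma_add_one hx] at h
  simpa [log_Gamma_add_one hx] using h

end Digamma

section Phi

variable {x t : ℝ}

lemma phiFn_nonpos (hx : 0 < x) : phiFn x ≤ 0 := by
  have := digamma_le_log hx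
  unfold phiFn
  linarith

lemma neg_inv_le_phiFn (hx : 0 < x) : -x⁻¹ ≤ phiFn x := by
  have := log_le_digamma_add_inv hx
  unfold phiFn
  linarith

lemma tendsto_phiFn_atTop : Tendsto phiFn atTop (𝓝 0) := by
  have hlow : Tendsto (fun x : ℝ ↦ -x⁻¹) atTop (𝓝 0) := by
    simpa using (tendsto_inv_atTop_zero (𝕜 := ℝ)).neg
  refine tendsto_of_tendsto_of_tendsto_of_le_of_le' hlow tendsto_const_nhds ?_ ?_
  · filter_upwards [eventually_gt_atTop 0] with x hx using neg_inv_le_phiFn hx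
  · filter_upwards [eventually_gt_atTop 0] with x hx using phiFn_nonpos hx

lemma phiFn_sub_phiFn_add_one (ht : 0 < t) :
    phiFn t - phiFn (t + 1) = log (1 + t⁻¹) - t⁻¹ := by
  have hlog : log (1 + t⁻¹) = log (t + 1) - log t := by
    rw [← log_div (by positivity) ht.ne', add_div, div_self ht.ne', one_div]
  rw [hlog, phiFn, phiFn, digamma_add_one ht]
  ring

lemma inv_add_one_sub_inv_lt_phiFn_sub_phiFn_add_one (ht : 0 < t) :
    (t + 1)⁻¹ - t⁻¹ < phiFn t - phiFn (t + 1) := by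
  have h := one_sub_inv_lt_log (y := 1 + t⁻¹) (by positivity) (by simp [ht.ne'])
  have h1 : 1 - (1 + t⁻¹)⁻¹ = (t + 1)⁻¹ := by field_simp; ring
  rw [phiFn_sub_phiFn_add_one ht]
  linarith

lemma phiFn_sub_phiFn_add_one_lt (ht : 0 < t) :
    phiFn t - phiFn (t + 1) < ((t + 1)⁻¹ - t⁻¹) / 2 := by
  have h := log_lt_sub_inv_div_two (y := 1 + t⁻¹) (by simpa using ht)
  have h1 : (1 + t⁻¹ - (1 + t⁻¹)⁻¹) / 2 - t⁻¹ = ((t + 1)⁻¹ - t⁻¹) / 2 := by field_simp; ring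
  rw [phiFn_sub_phiFn_add_one ht]
  linarith

lemma strictMonoOn_phiFn_sub_phiFn_add_one :
    StrictMonoOn (fun t ↦ phiFn t - phiFn (t + 1)) (Ioi 0) := by
  intro s (hs : 0 < s) t (ht : 0 < t) hst
  simp only [phiFn_sub_phiFn_add_one hs, phiFn_sub_phiFn_add_one ht]
  exact strictAntiOn_log_one_add_sub_self (mem_Ici.mpr (by positivity))
    (mem_Ici.mpr (by positivity)) (inv_strictAnti₀ hs hst)

lemma phiFn_lt (hx : 0 < x) : phiFn x < -1 / (2 * x) := by
  have hlim : Tendsto (fun t ↦ phiFn t - -1 / (2 * t)) atTop (𝓝 0) := by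
    simpa using tendsto_phiFn_atTop.sub
      (tendsto_const_nhds.div_atTop (tendsto_id.const_mul_atTop two_pos))
  have hneg := neg_of_tendsto_zero_of_lt_add_one hlim fun t ht ↦ by
    have hstep := phiFn_sub_phiFn_add_one_lt (hx.trans_le ht)
    have hdiff : -1 / (2 * t) - -1 / (2 * (t + 1)) = ((t + 1)⁻¹ - t⁻¹) / 2 := by field_simp; ring
    linarith
  linarith

lemma phiFn_neg (hx : 0 < x) : phiFn x < 0 :=
  (phiFn_lt hx).trans (div_neg_of_neg_of_pos (by norm_num) (by positivity))

lemma lt_phiFn (hx : 0 < x) : -1 / x < phiFn x := by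
  have hlim : Tendsto (fun t ↦ -1 / t - phiFn t) atTop (𝓝 0) := by
    simpa using (tendsto_const_nhds.div_atTop tendsto_id).sub tendsto_phiFn_atTop
  have hneg := neg_of_tendsto_zero_of_lt_add_one hlim fun t ht ↦ by
    have hstep := inv_add_one_sub_inv_lt_phiFn_sub_phiFn_add_one (hx.trans_le ht)
    simp only [neg_div, one_div]
    linarith
  linarith

lemma strictMonoOn_phiFn : StrictMonoOn phiFn (Ioi 0) := by
  intro x (hx : 0 < x) y (hy : 0 < y) hxy
  have hlim : Tendsto (fun t ↦ phiFn t - phiFn (t + (y - x))) atTop (𝓝 0) := by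
    simpa using tendsto_phiFn_atTop.sub
      (tendsto_phiFn_atTop.comp (tendsto_atTop_add_const_right _ _ tendsto_id))
  have hneg := neg_of_tendsto_zero_of_lt_add_one hlim fun t ht ↦ by
    have hstep := strictMonoOn_phiFn_sub_phiFn_add_one (mem_Ioi.mpr (hx.trans_le ht))
      (mem_Ioi.mpr (by linarith : 0 < t + (y - x))) (by linarith : t < t + (y - x))
    simp only [add_right_comm t 1] at hstep ⊢
    linarith
  simpa using hneg

lemma tendsto_phiFn_nhdsGT_zero : Tendsto phiFn (𝓝[>] 0) atBot := by
  have h : Tendsto (fun x : ℝ ↦ -1 / (2 * x)) (𝓝[>] 0) atBot := by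
    refine (tendsto_neg_atTop_atBot.comp
      (tendsto_inv_nhdsGT_zero.const_mul_atTop (one_half_pos (α := ℝ)))).congr fun x ↦ ?_
    simp only [Function.comp_apply]
    ring
  refine tendsto_atBot_mono' _ ?_ h
  filter_upwards [self_mem_nhdsWithin] with x hx using (phiFn_lt hx).le

lemma hasDerivAt_log_Gamma_sub_mul_log_add_self (hx : 0 < x) :
    HasDerivAt (fun y ↦ log (Gamma y) - (y * log y - y)) (phiFn x) x :=
  ((hasDerivAt_log_Gamma hx).sub ((hasDerivAt_mul_log hx.ne').sub (hasDerivAt_id x))).congr_deriv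
    (by simp [phiFn])

lemma exists_phiFn_eq {a : ℝ} (ha : a < 0) : ∃ x > 0, phiFn x = a := by
  have hconn : (phiFn '' Ioi 0).OrdConnected := ordConnected_Ioi.image_hasDerivWithinAt
    fun x hx ↦ (hasDerivAt_log_Gamma_sub_mul_log_add_self hx).hasDerivWithinAt
  obtain ⟨x₁, hx₁, h₁⟩ : ∃ x > 0, phiFn x < a :=
    ((tendsto_phiFn_nhdsGT_zero.eventually (eventually_lt_atBot a)).and
      self_mem_nhdsWithin).exists.imp fun x hx ↦ ⟨hx.2, hx.1⟩
  obtain ⟨x₂, hx₂, h₂⟩ : ∃ x > 0, a < phiFn x :=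
    ((tendsto_phiFn_atTop.eventually (eventually_gt_nhds ha)).and
      (eventually_gt_atTop 0)).exists.imp fun x hx ↦ ⟨hx.2, hx.1⟩
  obtain ⟨x, hx, hxa⟩ := hconn.out (mem_image_of_mem _ hx₁) (mem_image_of_mem _ hx₂) ⟨h₁.le, h₂.le⟩
  exact ⟨x, hx, hxa⟩

end Phi

/-- `φ` is strictly increasing on `(0,∞)`, satisfies `-1/x < φ(x) < -1/(2x)`
(in particular `φ < 0`), tends to `-∞` as `x → 0⁺` and to `0` as `x → ∞`; consequently for
every `c > 0` the function `x ↦ φ(x) + c` has a unique zero in `(0,∞)`. -/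
theorem phi_strictMono_bounds_limits_unique_zero :
    StrictMonoOn phiFn (Set.Ioi (0 : ℝ)) ∧
    (∀ x > (0 : ℝ), -1 / x < phiFn x ∧ phiFn x < -1 / (2 * x)) ∧
    (∀ x > (0 : ℝ), phiFn x < 0) ∧
    Tendsto phiFn (nhdsWithin 0 (Set.Ioi 0)) atBot ∧
    Tendsto phiFn atTop (nhds 0) ∧
    (∀ c > (0 : ℝ), ∃! x : ℝ, x > 0 ∧ phiFn x + c = 0) := by
  refine ⟨strictMonoOn_phiFn, fun x hx ↦ ⟨lt_phiFn hx, phiFn_lt hx⟩, fun x hx ↦ phiFn_neg hx,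
    tendsto_phiFn_nhdsGT_zero, tendsto_phiFn_atTop, fun c hc ↦ ?_⟩
  obtain ⟨x, hx, hxc⟩ := exists_phiFn_eq (neg_neg_of_pos hc)
  refine ⟨x, ⟨hx, by linarith⟩, fun y ⟨hy, hyc⟩ ↦ strictMonoOn_phiFn.injOn hy hx ?_⟩
  linarith
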